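/- Let Ω ⊂ ℝ² be bounded, ω ∈ L^∞(Ω × (t₁,t₂)) with ω(x,t) = ω₀(X_{t,0}(x)) for a flow X of a bounded divergence-free Log-Lipschitz field u, where X_t is measure-preserving. Then for every φ ∈ C¹(Ω̄ × [t₁,t₂]): ∫_{t₁}^{t₂} ∫_Ω ω (∂_t φ + u·∇φ) dx dt = ∫_Ω ω(·,t₂) φ(·,t₂) − ω(·,t₁) φ(·,t₁) dx. -/

import Mathlib

/-!
Pulling back by the measure-preserving map `X t`, which `Xinv t` inverts on `Ω`, turns each
integral of `ω₀ (Xinv t x) * ψ x` over `Ω` into the Lagrangian integral of `ω₀ a * ψ (X t a)`.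
In Lagrangian variables the integrand on the left is `ω₀ a` times the time derivative of
`t ↦ φ (X t a) t`, so differentiating under the integral sign (everything is bounded because the
trajectories stay in the compact set `closure Ω`) and the fundamental theorem of calculus give the
identity.

No measurability of `ω₀ ∘ Xinv t` is needed: by Lusin–Souslin, `X t` restricted to `Ω` is a
measurable embedding, and for those the change of variables holds for arbitrary integrands.
-/

open MeasureTheory Set Filter Metric Topology

theorem Measurable.measurableEmbedding_domRestrict {α : Type*} [MeasurableSpace α]
    [StandardBorelSpace α] {s : Set α} {T : α → α} (hT : Measurable T) (hs : MeasurableSet s)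
    (hinj : InjOn T s) : MeasurableEmbedding (s.domRestrict T) :=
  have := hs.standardBorel
  (hT.comp measurable_subtype_coe).measurableEmbedding hinj.injective

namespace MeasureTheory

variable {α G : Type*} [MeasurableSpace α] {μ : Measure α} {s : Set α} {T : α → α}
  [NormedAddCommGroup G]

theorem MeasurePreserving.domRestrict (hT : MeasurePreserving T (μ.restrict s) (μ.restrict s))
    (hs : MeasurableSet s) :
    MeasurePreserving (s.domRestrict T) (μ.comap Subtype.val) (μ.restrict s) := by
  refine ⟨hT.measurable.comp measurable_subtype_coe, ?_⟩
  rw [← hT.map_eq, ← map_comap_subtype_coe hs,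
    Measure.map_map hT.measurable measurable_subtype_coe]
  rfl

variable [StandardBorelSpace α]

theorem MeasurePreserving.setIntegral_comp_of_injOn
    (hT : MeasurePreserving T (μ.restrict s) (μ.restrict s)) (hs : MeasurableSet s)
    (hinj : InjOn T s) [NormedSpace ℝ G] (g : α → G) :
    ∫ x in s, g (T x) ∂μ = ∫ x in s, g x ∂μ :=
  (integral_subtype_comap hs _).symm.trans <|
    (hT.domRestrict hs).integral_comp (hT.measurable.measurableEmbedding_domRestrict hs hinj) g

theorem MeasurePreserving.integrableOn_comp_iff_of_injOn
    (hT : MeasurePreserving T (μ.restrict s) (μ.restrict s)) (hs : MeasurableSet s)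
    (hinj : InjOn T s) {g : α → G} :
    IntegrableOn (fun x => g (T x)) s μ ↔ IntegrableOn g s μ :=
  (integrableOn_iff_comap_subtypeVal hs).trans <|
    (hT.domRestrict hs).integrable_comp_emb (hT.measurable.measurableEmbedding_domRestrict hs hinj)

theorem MeasurePreserving.setIntegral_comp_leftInvOn
    (hT : MeasurePreserving T (μ.restrict s) (μ.restrict s)) (hs : MeasurableSet s)
    {Tinv : α → α} (hinv : LeftInvOn Tinv T s) [NormedSpace ℝ G] (F : α → α → G) :
    ∫ y in s, F (Tinv y) y ∂μ = ∫ x in s, F x (T x) ∂μ := by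
  rw [← hT.setIntegral_comp_of_injOn hs hinv.injOn]
  exact setIntegral_congr_fun hs fun x hx => by rw [hinv hx]

theorem MeasurePreserving.integrableOn_comp_leftInvOn_iff
    (hT : MeasurePreserving T (μ.restrict s) (μ.restrict s)) (hs : MeasurableSet s)
    {Tinv : α → α} (hinv : LeftInvOn Tinv T s) {F : α → α → G} :
    IntegrableOn (fun y => F (Tinv y) y) s μ ↔ IntegrableOn (fun x => F x (T x)) s μ := by
  rw [← hT.integrableOn_comp_iff_of_injOn hs hinv.injOn]
  exact integrableOn_congr_fun (fun x hx => by rw [hinv hx]) hs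

end MeasureTheory

section Calculus

variable {E F : Type*} [NormedAddCommGroup E] [NormedSpace ℝ E] [NormedAddCommGroup F]
  [NormedSpace ℝ F]

/-- `∂ₜφ + v · ∇ₓφ` at `(x, t)`. -/
noncomputable def materialDeriv (φ : E → ℝ → F) (x : E) (t : ℝ) (v : E) : F :=
  fderiv ℝ (fun p : E × ℝ => φ p.1 p.2) (x, t) (v, 1)

variable {φ : E → ℝ → F} {x : E} {t : ℝ}

theorem DifferentiableAt.hasDerivAt_comp_curve {γ : ℝ → E} {w : E}
    (hφ : DifferentiableAt ℝ (fun p : E × ℝ => φ p.1 p.2) (γ t, t)) (hγ : HasDerivAt γ w t) :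
    HasDerivAt (fun s => φ (γ s) s) (materialDeriv φ (γ t) t w) t := by
  have hgraph : HasDerivAt (fun s => (γ s, s)) (w, 1) t := hγ.prodMk (hasDerivAt_id t)
  exact hφ.hasFDerivAt.comp_hasDerivAt (f := fun s => (γ s, s)) t hgraph

theorem DifferentiableAt.deriv_add_fderiv_eq_materialDeriv
    (hφ : DifferentiableAt ℝ (fun p : E × ℝ => φ p.1 p.2) (x, t)) (w : E) :
    deriv (φ x) t + fderiv ℝ (fun y => φ y t) x w = materialDeriv φ x t w := by
  have htime := (hφ.hasDerivAt_comp_curve (hasDerivAt_const t x)).deriv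
  have hslice : HasFDerivAt (fun y => (y, t)) ((ContinuousLinearMap.id ℝ E).prod 0) x :=
    (hasFDerivAt_id x).prodMk (hasFDerivAt_const t x)
  have hspace : HasFDerivAt (fun y => φ y t) _ x :=
    hφ.hasFDerivAt.comp (f := fun y => (y, t)) x hslice
  rw [htime, hspace.fderiv, materialDeriv, materialDeriv, ContinuousLinearMap.comp_apply,
    ← map_add]
  simp

theorem IsCompact.exists_bound_materialDeriv {K : Set E} {J : Set ℝ} (hK : IsCompact K)
    (hJ : IsCompact J) (hφ : Continuous (fderiv ℝ (fun p : E × ℝ => φ p.1 p.2))) (A : ℝ) :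
    ∃ C, ∀ x ∈ K, ∀ t ∈ J, ∀ v : E, ‖v‖ ≤ A → ‖materialDeriv φ x t v‖ ≤ C := by
  obtain ⟨C, hC⟩ := (hK.prod hJ).exists_bound_of_continuousOn hφ.continuousOn
  refine ⟨C * max A 1, fun x hx t ht v hv => ?_⟩
  have hdirection : ‖((v, 1) : E × ℝ)‖ ≤ max A 1 := by
    rw [Prod.norm_def, norm_one]
    exact max_le_max hv le_rfl
  calc ‖materialDeriv φ x t v‖
      ≤ ‖fderiv ℝ (fun p : E × ℝ => φ p.1 p.2) (x, t)‖ * ‖((v, 1) : E × ℝ)‖ :=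
        ContinuousLinearMap.le_opNorm _ _
    _ ≤ C * max A 1 :=
        mul_le_mul (hC (x, t) ⟨hx, ht⟩) hdirection (norm_nonneg _)
          ((norm_nonneg _).trans (hC (x, t) ⟨hx, ht⟩))

end Calculus

theorem measurable_of_hasDerivAt_param {α E : Type*} [MeasurableSpace α] [NormedAddCommGroup E]
    [NormedSpace ℝ E] [MeasurableSpace E] [BorelSpace E] [SecondCountableTopology E]
    {f : ℝ → α → E} {f' : α → E} {t : ℝ} (hf : ∀ s, Measurable (f s))
    (hderiv : ∀ a, HasDerivAt (fun s => f s a) (f' a) t) : Measurable f' := by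
  refine measurable_of_tendsto_metrizable' (𝓝[≠] t)
    (f := fun s a => slope (fun s => f s a) t s) (fun s => ?_)
    (tendsto_pi_nhds.2 fun a => hasDerivAt_iff_tendsto_slope.1 (hderiv a))
  simp only [slope_def_module]
  exact ((hf s).sub (hf t)).const_smul _

theorem intervalIntegrable_of_hasDerivAt_of_norm_le {F : Type*} [NormedAddCommGroup F]
    [NormedSpace ℝ F] [CompleteSpace F] {f f' : ℝ → F} {a b C : ℝ}
    (hf : ∀ t, HasDerivAt f (f' t) t) (hbound : ∀ t ∈ uIcc a b, ‖f' t‖ ≤ C) :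
    IntervalIntegrable f' volume a b := by
  have hmeas : StronglyMeasurable f' := by
    rw [show f' = deriv f from funext fun t => (hf t).deriv.symm]
    exact stronglyMeasurable_deriv f
  refine (intervalIntegrable_const (c := C)).mono_fun' hmeas.aestronglyMeasurable ?_
  filter_upwards [ae_restrict_mem measurableSet_uIoc] with t ht
  exact hbound t (uIoc_subset_uIcc ht)

section Flow

variable {α E : Type*} [MeasurableSpace α] {μ : Measure α} [NormedAddCommGroup E]
  [MeasurableSpace E] [BorelSpace E] {ω : α → ℝ} {φ : E → ℝ → ℝ} {X V : ℝ → α → E} {A : ℝ}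
  {K : Set E}

theorem integrable_mul_comp_flow (hω : Integrable ω μ)
    (hφ : Continuous (fun p : E × ℝ => φ p.1 p.2)) (hX : ∀ t, Measurable (X t))
    (hK : IsCompact K) (hXK : ∀ᵐ a ∂μ, ∀ t, X t a ∈ K) (t : ℝ) :
    Integrable (fun a => ω a * φ (X t a) t) μ := by
  have hslice : Continuous fun x => φ x t := hφ.comp (continuous_id.prodMk continuous_const)
  obtain ⟨C, hC⟩ := hK.exists_bound_of_continuousOn hslice.continuousOn
  exact hω.mul_bdd (hslice.measurable.comp (hX t)).aestronglyMeasurable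
    (hXK.mono fun a ha => hC _ (ha t))

variable [NormedSpace ℝ E] [SecondCountableTopology E]

theorem hasDerivAt_integral_mul_comp_flow (hω : Integrable ω μ)
    (hφ : ContDiff ℝ 1 (fun p : E × ℝ => φ p.1 p.2)) (hX : ∀ t, Measurable (X t))
    (hXV : ∀ a t, HasDerivAt (fun s => X s a) (V t a) t) (hV : ∀ t a, ‖V t a‖ ≤ A)
    (hK : IsCompact K) (hXK : ∀ᵐ a ∂μ, ∀ t, X t a ∈ K) (t₀ : ℝ) :
    HasDerivAt (fun t => ∫ a, ω a * φ (X t a) t ∂μ)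
      (∫ a, ω a * materialDeriv φ (X t₀ a) t₀ (V t₀ a) ∂μ) t₀ := by
  obtain ⟨C, hC⟩ := hK.exists_bound_materialDeriv (isCompact_closedBall t₀ 1)
    (hφ.continuous_fderiv one_ne_zero) A
  have hφ_meas (t : ℝ) : Measurable fun a => φ (X t a) t :=
    (hφ.continuous.comp (continuous_id.prodMk continuous_const)).measurable.comp (hX t)
  have hD_meas : Measurable fun a => materialDeriv φ (X t₀ a) t₀ (V t₀ a) := by
    have hcont : Continuous fun q : E × E => materialDeriv φ q.1 t₀ q.2 :=
      ((hφ.continuous_fderiv one_ne_zero).comp (continuous_fst.prodMk continuous_const)).clm_apply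
        (continuous_snd.prodMk continuous_const)
    exact hcont.measurable.comp
      ((hX t₀).prodMk (measurable_of_hasDerivAt_param hX fun a => hXV a t₀))
  refine (hasDerivAt_integral_of_dominated_loc_of_deriv_le
    (F := fun t a => ω a * φ (X t a) t)
    (F' := fun t a => ω a * materialDeriv φ (X t a) t (V t a)) (bound := fun a => ‖ω a‖ * C)
    (closedBall_mem_nhds t₀ one_pos)
    (Eventually.of_forall fun t => hω.aestronglyMeasurable.mul (hφ_meas t).aestronglyMeasurable)
    (integrable_mul_comp_flow hω hφ.continuous hX hK hXK t₀)
    (hω.aestronglyMeasurable.mul hD_meas.aestronglyMeasurable) ?_ (hω.norm.mul_const _) ?_).2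
  · filter_upwards [hXK] with a ha t ht
    rw [norm_mul]
    exact mul_le_mul_of_nonneg_left (hC _ (ha t) t ht _ (hV t a)) (norm_nonneg _)
  · refine Eventually.of_forall fun a t _ => ?_
    exact ((hφ.differentiable one_ne_zero _).hasDerivAt_comp_curve (hXV a t)).const_mul (ω a)

theorem integral_integral_mul_materialDeriv_eq_sub (hω : Integrable ω μ)
    (hφ : ContDiff ℝ 1 (fun p : E × ℝ => φ p.1 p.2)) (hX : ∀ t, Measurable (X t))
    (hXV : ∀ a t, HasDerivAt (fun s => X s a) (V t a) t) (hV : ∀ t a, ‖V t a‖ ≤ A)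
    (hK : IsCompact K) (hXK : ∀ᵐ a ∂μ, ∀ t, X t a ∈ K) (t₁ t₂ : ℝ) :
    ∫ t in t₁..t₂, ∫ a, ω a * materialDeriv φ (X t a) t (V t a) ∂μ =
      ∫ a, ω a * φ (X t₂ a) t₂ ∂μ - ∫ a, ω a * φ (X t₁ a) t₁ ∂μ := by
  have hderiv := hasDerivAt_integral_mul_comp_flow hω hφ hX hXV hV hK hXK
  obtain ⟨C, hC⟩ := hK.exists_bound_materialDeriv (isCompact_uIcc (a := t₁) (b := t₂))
    (hφ.continuous_fderiv one_ne_zero) A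
  refine intervalIntegral.integral_eq_sub_of_hasDerivAt (fun t _ => hderiv t)
    (intervalIntegrable_of_hasDerivAt_of_norm_le hderiv
      (C := ∫ a, ‖ω a‖ * C ∂μ) fun t ht => ?_)
  refine norm_integral_le_of_norm_le (hω.norm.mul_const C) ?_
  filter_upwards [hXK] with a ha
  rw [norm_mul]
  exact mul_le_mul_of_nonneg_left (hC _ (ha t) t ht _ (hV t a)) (norm_nonneg _)

end Flow

theorem lagrangian_solution_is_weak_solution_general
    (Ω : Set (EuclideanSpace ℝ (Fin 2))) (hΩ : Bornology.IsBounded Ω)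
    (hΩmeas : MeasurableSet Ω)
    (u : EuclideanSpace ℝ (Fin 2) → ℝ → EuclideanSpace ℝ (Fin 2))
    (A : ℝ) (hu_bdd : ∀ x t, ‖u x t‖ ≤ A)
    (X Xinv : ℝ → EuclideanSpace ℝ (Fin 2) → EuclideanSpace ℝ (Fin 2))
    (hXode : ∀ x t, HasDerivAt (fun s => X s x) (u (X t x) t) t)
    (hXmp : ∀ t : ℝ, MeasurePreserving (X t) (volume.restrict Ω) (volume.restrict Ω))
    (hXbij : ∀ t : ℝ, Set.BijOn (X t) Ω Ω)
    (hXinv : ∀ t : ℝ, ∀ x ∈ Ω, Xinv t (X t x) = x ∧ X t (Xinv t x) = x)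
    (ω₀ : EuclideanSpace ℝ (Fin 2) → ℝ)
    (hω₀ : MemLp ω₀ ⊤ (volume.restrict Ω))
    (t₁ t₂ : ℝ)
    (φ : EuclideanSpace ℝ (Fin 2) → ℝ → ℝ)
    (hφ : ContDiff ℝ 1 (fun p : EuclideanSpace ℝ (Fin 2) × ℝ => φ p.1 p.2)) :
    ∫ t in t₁..t₂, ∫ x in Ω,
        ω₀ (Xinv t x) * (deriv (φ x) t + fderiv ℝ (fun y => φ y t) x (u x t)) =
      ∫ x in Ω, (ω₀ (Xinv t₂ x) * φ x t₂ - ω₀ (Xinv t₁ x) * φ x t₁) := by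
  have : IsFiniteMeasure (volume.restrict Ω) :=
    isFiniteMeasure_restrict.2 hΩ.measure_lt_top.ne
  have hω₀_int : Integrable ω₀ (volume.restrict Ω) := hω₀.integrable le_top
  have hX_meas (t : ℝ) : Measurable (X t) := (hXmp t).measurable
  have hinv (t : ℝ) : LeftInvOn (Xinv t) (X t) Ω := fun x hx => (hXinv t x hx).1
  have hXK : ∀ᵐ a ∂(volume.restrict Ω), ∀ t, X t a ∈ closure Ω := by
    filter_upwards [ae_restrict_mem hΩmeas] with a ha t
    exact subset_closure ((hXbij t).mapsTo ha)
  have hpull (t : ℝ) (ψ : EuclideanSpace ℝ (Fin 2) → ℝ) :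
      ∫ x in Ω, ω₀ (Xinv t x) * ψ x = ∫ a in Ω, ω₀ a * ψ (X t a) :=
    (hXmp t).setIntegral_comp_leftInvOn hΩmeas (hinv t) fun a x => ω₀ a * ψ x
  have hint (t : ℝ) : IntegrableOn (fun x => ω₀ (Xinv t x) * φ x t) Ω :=
    ((hXmp t).integrableOn_comp_leftInvOn_iff hΩmeas (hinv t)
      (F := fun a x => ω₀ a * φ x t)).2
      (integrable_mul_comp_flow hω₀_int hφ.continuous hX_meas hΩ.isCompact_closure hXK t)
  have hmaterial (x : EuclideanSpace ℝ (Fin 2)) (t : ℝ) :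
      deriv (φ x) t + fderiv ℝ (fun y => φ y t) x (u x t) = materialDeriv φ x t (u x t) :=
    (hφ.differentiable one_ne_zero _).deriv_add_fderiv_eq_materialDeriv _
  calc _ = ∫ t in t₁..t₂, ∫ a in Ω, ω₀ a * materialDeriv φ (X t a) t (u (X t a) t) := by
          refine intervalIntegral.integral_congr fun t _ => ?_
          simp only [hmaterial]
          exact hpull t fun x => materialDeriv φ x t (u x t)
    _ = (∫ a in Ω, ω₀ a * φ (X t₂ a) t₂) - ∫ a in Ω, ω₀ a * φ (X t₁ a) t₁ :=
          integral_integral_mul_materialDeriv_eq_sub hω₀_int hφ hX_meas hXode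
            (fun t a => hu_bdd _ t) hΩ.isCompact_closure hXK t₁ t₂
    _ = _ := by
          rw [← hpull t₂ (φ · t₂), ← hpull t₁ (φ · t₁), integral_sub (hint t₂) (hint t₁)]

theorem lagrangian_solution_is_weak_solution
    (Ω : Set (EuclideanSpace ℝ (Fin 2))) (hΩ : Bornology.IsBounded Ω)
    (hΩmeas : MeasurableSet Ω)
    (mod : ℝ → ℝ) (hmod1 : ∀ r : ℝ, 0 < r → r ≤ 1 → mod r = r * (1 - Real.log r))
    (hmod2 : ∀ r : ℝ, 1 < r → mod r = 1)
    (u : EuclideanSpace ℝ (Fin 2) → ℝ → EuclideanSpace ℝ (Fin 2))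
    (A : ℝ) (hu_bdd : ∀ x t, ‖u x t‖ ≤ A)
    (M : ℝ) (hu_LL : ∀ x y t, ‖u x t - u y t‖ ≤ M * mod ‖x - y‖)
    (X Xinv : ℝ → EuclideanSpace ℝ (Fin 2) → EuclideanSpace ℝ (Fin 2))
    (hX0 : ∀ x, X 0 x = x)
    (hXode : ∀ x t, HasDerivAt (fun s => X s x) (u (X t x) t) t)
    (hXmp : ∀ t : ℝ, MeasurePreserving (X t) (volume.restrict Ω) (volume.restrict Ω))
    (hXbij : ∀ t : ℝ, Set.BijOn (X t) Ω Ω)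
    (hXinv : ∀ t : ℝ, ∀ x ∈ Ω, Xinv t (X t x) = x ∧ X t (Xinv t x) = x)
    (ω₀ : EuclideanSpace ℝ (Fin 2) → ℝ)
    (hω₀ : MemLp ω₀ ⊤ (volume.restrict Ω))
    (t₁ t₂ : ℝ) (ht : t₁ ≤ t₂)
    (φ : EuclideanSpace ℝ (Fin 2) → ℝ → ℝ)
    (hφ : ContDiff ℝ 1 (fun p : EuclideanSpace ℝ (Fin 2) × ℝ => φ p.1 p.2)) :
    ∫ t in t₁..t₂, ∫ x in Ω,
        ω₀ (Xinv t x) * (deriv (φ x) t + fderiv ℝ (fun y => φ y t) x (u x t)) =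
      ∫ x in Ω, (ω₀ (Xinv t₂ x) * φ x t₂ - ω₀ (Xinv t₁ x) * φ x t₁) :=
  lagrangian_solution_is_weak_solution_general Ω hΩ hΩmeas u A hu_bdd X Xinv hXode hXmp hXbij hXinv
    ω₀ hω₀ t₁ t₂ φ hφ
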